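/- arXiv:2311.10849 — 2 statements merged into one kernel-verified Lean document; each statement's English description precedes it below -/
import Mathlib

section
/- Let f be a proper lower semicontinuous convex function on ℝ^d and (x, x*) ∈ dom f × ℝ^d. Suppose there exists a dense subset D of ri(dom f) such that for every y ∈ D there exists y* ∈ ∂f(y) with ⟨y* − x*, y − x⟩ ≥ 0. Then x* ∈ ∂f(x). -/
open Filter Topology MeasureTheory Set Metric RealInnerProductSpace
open scoped ENNReal NNReal

noncomputable section

def Proper {d : ℕ} (f : EuclideanSpace ℝ (Fin d) → EReal) : Prop :=
  (∀ x, f x ≠ ⊥) ∧ ∃ x, f x ≠ ⊤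

def ConvexFn {d : ℕ} (f : EuclideanSpace ℝ (Fin d) → EReal) : Prop :=
  Convex ℝ {p : EuclideanSpace ℝ (Fin d) × ℝ | f p.1 ≤ (p.2 : EReal)}

def Subdiff {d : ℕ} (f : EuclideanSpace ℝ (Fin d) → EReal) (x : EuclideanSpace ℝ (Fin d)) :
    Set (EuclideanSpace ℝ (Fin d)) :=
  {v | f x ≠ ⊤ ∧ ∀ y, f x + ((⟪v, y - x⟫ : ℝ) : EReal) ≤ f y}

def slopeFn {d : ℕ} (f : EuclideanSpace ℝ (Fin d) → EReal) (x : EuclideanSpace ℝ (Fin d)) : EReal :=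
  sInf ((fun v => (‖v‖ : EReal)) '' Subdiff f x)

def eLiminf {d : ℕ} (φ : ℕ → EuclideanSpace ℝ (Fin d) → EReal)
    (x : EuclideanSpace ℝ (Fin d)) : EReal :=
  ⨅ (u : ℕ → EuclideanSpace ℝ (Fin d)) (_ : Tendsto u atTop (𝓝 x)),
    Filter.liminf (fun n => φ n (u n)) atTop

def eLimsup {d : ℕ} (φ : ℕ → EuclideanSpace ℝ (Fin d) → EReal)
    (x : EuclideanSpace ℝ (Fin d)) : EReal :=
  ⨅ (u : ℕ → EuclideanSpace ℝ (Fin d)) (_ : Tendsto u atTop (𝓝 x)),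
    Filter.limsup (fun n => φ n (u n)) atTop

def EpiConv {d : ℕ} (φ : ℕ → EuclideanSpace ℝ (Fin d) → EReal)
    (ψ : EuclideanSpace ℝ (Fin d) → EReal) : Prop :=
  ∀ x, eLimsup φ x ≤ ψ x ∧ ψ x ≤ eLiminf φ x

def edom {d : ℕ} (h : EuclideanSpace ℝ (Fin d) → EReal) : Set (EuclideanSpace ℝ (Fin d)) :=
  {x | h x ≠ ⊤}

def rdom {d : ℕ} (h : EuclideanSpace ℝ (Fin d) → EReal) : Set (EuclideanSpace ℝ (Fin d)) :=
  {x | h x ≠ ⊤ ∧ h x ≠ ⊥}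

def domSub {d : ℕ} (f : EuclideanSpace ℝ (Fin d) → EReal) : Set (EuclideanSpace ℝ (Fin d)) :=
  {x | (Subdiff f x).Nonempty}

def erealToENNReal (x : EReal) : ℝ≥0∞ :=
  if x = ⊤ then ⊤ else ENNReal.ofReal x.toReal

/-! Write `h w = f w - ⟪x*, w - x⟫`. For `y ∈ D` with a subgradient `y*` as in the hypothesis,
the subgradient inequality in the direction `y - x` gives `h y ≤ h (y + c (y - x))` for every
`c ≥ 0`: `h` is nondecreasing along the ray from `x` through `y`. Approximating `x + t (z - x)`,
`z ∈ ri (dom f)`, by points of `D`, lower semicontinuity there and continuity of `f` on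
`ri (dom f)` relative to the affine hull give `h (x + t (z - x)) ≤ h z` for `0 < t ≤ 1`. Letting
`t → 0` and using lower semicontinuity at `x` gives `h x ≤ h z` on `ri (dom f)`, and convexity
extends this to `dom f`, i.e. `x* ∈ ∂f(x)`. -/

section RelativeInterior

theorem AffineSubspace.exists_affineMap_retraction {k E : Type*} [DivisionRing k]
    [AddCommGroup E] [Module k E] (A : AffineSubspace k E) {a : E} (ha : a ∈ A) :
    ∃ r : E →ᵃ[k] E, (∀ w, r w ∈ A) ∧ ∀ w ∈ A, r w = w := by
  obtain ⟨q, hq⟩ := A.direction.exists_isCompl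
  let p := A.direction.projection q hq
  refine ⟨⟨fun w => p (w -ᵥ a) +ᵥ a, p, fun w v => ?_⟩, fun w => ?_, fun w hw => ?_⟩
  · change p ((v +ᵥ w) -ᵥ a) +ᵥ a = p v +ᵥ p (w -ᵥ a) +ᵥ a
    rw [vadd_vsub_assoc, map_add, add_vadd]
  · exact AffineSubspace.vadd_mem_of_mem_direction (Submodule.projection_apply_mem hq _) ha
  · change p (w -ᵥ a) +ᵥ a = w
    rw [Submodule.projection_apply_of_mem_left hq (A.vsub_mem_direction hw ha)]
    exact vsub_vadd w a

theorem intrinsicInterior_eq_interior_preimage_inter {k V P : Type*} [Ring k] [AddCommGroup V]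
    [Module k V] [TopologicalSpace P] [AddTorsor V P] {s : Set P} {r : P → P} (hr : Continuous r)
    (hr_mem : ∀ w, r w ∈ affineSpan k s) (hr_fix : ∀ w ∈ affineSpan k s, r w = w) :
    intrinsicInterior k s = interior (r ⁻¹' s) ∩ affineSpan k s := by
  ext z
  constructor
  · rintro ⟨p, hp, rfl⟩
    obtain ⟨U, hU, hUp⟩ :=
      isOpen_induced_iff.1 (isOpen_interior (s := ((↑) ⁻¹' s : Set (affineSpan k s))))
    have hpU : (p : P) ∈ U := by rw [← hUp] at hp; exact hp
    refine ⟨mem_interior.2 ⟨r ⁻¹' U, fun w hw => ?_, hU.preimage hr,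
      by rwa [Set.mem_preimage, hr_fix _ p.2]⟩, p.2⟩
    have : (⟨r w, hr_mem w⟩ : affineSpan k s) ∈ interior ((↑) ⁻¹' s) := by
      rw [← hUp]; exact hw
    exact interior_subset (s := ((↑) ⁻¹' s : Set (affineSpan k s))) this
  · rintro ⟨hz, hzA⟩
    refine ⟨⟨z, hzA⟩, mem_interior.2
      ⟨(Subtype.val ⁻¹' interior (r ⁻¹' s) : Set (affineSpan k s)), fun w hw => ?_,
        isOpen_interior.preimage continuous_subtype_val, hz⟩, rfl⟩
    have := interior_subset hw
    rwa [Set.mem_preimage, hr_fix _ w.2] at this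

variable {E : Type*} [NormedAddCommGroup E] [NormedSpace ℝ E] [FiniteDimensional ℝ E]
  {s : Set E} {x z : E}

theorem exists_affineMap_intrinsicInterior_eq (hs : s.Nonempty) :
    ∃ r : E →ᵃ[ℝ] E, (∀ w ∈ affineSpan ℝ s, r w = w) ∧
      intrinsicInterior ℝ s = interior (r ⁻¹' s) ∩ affineSpan ℝ s := by
  obtain ⟨r, hr_mem, hr_fix⟩ :=
    (affineSpan ℝ s).exists_affineMap_retraction (subset_affineSpan ℝ s hs.some_mem)
  exact ⟨r, hr_fix, intrinsicInterior_eq_interior_preimage_inter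
    r.continuous_of_finiteDimensional hr_mem hr_fix⟩

theorem Convex.lineMap_mem_intrinsicInterior (hs : Convex ℝ s) (hx : x ∈ s)
    (hz : z ∈ intrinsicInterior ℝ s) {t : ℝ} (ht₀ : 0 < t) (ht₁ : t ≤ 1) :
    AffineMap.lineMap x z t ∈ intrinsicInterior ℝ s := by
  obtain ⟨r, hr_fix, hri⟩ :=
    exists_affineMap_intrinsicInterior_eq ⟨z, intrinsicInterior_subset hz⟩
  have hxA := subset_affineSpan ℝ s hx
  rw [hri] at hz ⊢
  refine ⟨?_, AffineMap.lineMap_mem t hxA hz.2⟩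
  rw [AffineMap.lineMap_apply_module]
  refine (hs.affine_preimage r).combo_self_interior_mem_interior ?_ hz.1 (by linarith) ht₀
    (by ring)
  rwa [Set.mem_preimage, hr_fix x hxA]

theorem mem_nhdsWithin_affineSpan_of_mem_intrinsicInterior (hz : z ∈ intrinsicInterior ℝ s) :
    s ∈ 𝓝[affineSpan ℝ s] z := by
  obtain ⟨r, hr_fix, hri⟩ :=
    exists_affineMap_intrinsicInterior_eq ⟨z, intrinsicInterior_subset hz⟩
  rw [hri] at hz
  refine mem_nhdsWithin.2 ⟨_, isOpen_interior, hz.1, fun w ⟨hw, hwA⟩ => ?_⟩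
  rw [← hr_fix w hwA]
  exact interior_subset (s := r ⁻¹' s) hw

theorem ConvexOn.continuousWithinAt_affineSpan {g : E → ℝ} (hg : ConvexOn ℝ s g)
    (hz : z ∈ intrinsicInterior ℝ s) : ContinuousWithinAt g (affineSpan ℝ s) z := by
  obtain ⟨r, hr_fix, hri⟩ :=
    exists_affineMap_intrinsicInterior_eq ⟨z, intrinsicInterior_subset hz⟩
  rw [hri] at hz
  have hgr : ContinuousAt (g ∘ r) z :=
    ((hg.comp_affineMap r).continuousOn_interior z hz.1).continuousAt
      (isOpen_interior.mem_nhds hz.1)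
  exact hgr.continuousWithinAt.congr (fun w hw => by simp [hr_fix w hw])
    (by simp [hr_fix z hz.2])

theorem ConvexOn.le_of_forall_mem_intrinsicInterior {g φ : E → ℝ} (hg : ConvexOn ℝ s g)
    (hφ : Continuous φ) (h : ∀ w ∈ intrinsicInterior ℝ s, φ w ≤ g w) (hz : z ∈ s) :
    φ z ≤ g z := by
  obtain ⟨w, hw⟩ := Set.Nonempty.intrinsicInterior hg.1 ⟨z, hz⟩
  have hseg : ∀ᶠ t in 𝓝[>] (0 : ℝ),
      φ (AffineMap.lineMap z w t) ≤ (1 - t) * g z + t * g w := by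
    filter_upwards [Ioc_mem_nhdsGT (zero_lt_one' ℝ)] with t ⟨ht₀, ht₁⟩
    calc φ (AffineMap.lineMap z w t) ≤ g (AffineMap.lineMap z w t) :=
          h _ (hg.1.lineMap_mem_intrinsicInterior hz hw ht₀ ht₁)
      _ ≤ (1 - t) * g z + t * g w := by
          rw [AffineMap.lineMap_apply_module]
          exact hg.2 hz (intrinsicInterior_subset hw) (by linarith) ht₀.le (by ring)
  have hlim : Tendsto (fun t : ℝ => φ (AffineMap.lineMap z w t)) (𝓝[>] 0) (𝓝 (φ z)) := by
    have := (hφ.comp (AffineMap.lineMap_continuous (R := ℝ) (p := z) (q := w))).tendsto 0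
    simp only [Function.comp_def, AffineMap.lineMap_apply_zero] at this
    exact this.mono_left nhdsWithin_le_nhds
  have hlim' : Tendsto (fun t : ℝ => (1 - t) * g z + t * g w) (𝓝[>] 0) (𝓝 (g z)) := by
    have : Continuous fun t : ℝ => (1 - t) * g z + t * g w := by fun_prop
    simpa using (this.tendsto 0).mono_left nhdsWithin_le_nhds
  exact le_of_tendsto_of_tendsto hlim hlim' hseg

end RelativeInterior

theorem LowerSemicontinuous.toReal_le_of_tendsto {X α : Type*} [TopologicalSpace X]
    {f : X → EReal} (hf : LowerSemicontinuous f) {a : X} (ha : f a ≠ ⊥) {l : Filter α}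
    [l.NeBot] {y : α → X} (hy : Tendsto y l (𝓝 a)) {c : α → ℝ} {b : ℝ}
    (hc : Tendsto c l (𝓝 b)) (h : ∀ᶠ i in l, f (y i) ≠ ⊤ ∧ (f (y i)).toReal ≤ c i) :
    (f a).toReal ≤ b := by
  refine le_of_forall_pos_le_add fun ε hε => ?_
  have hsub : ∀ᶠ i in l, y i ∈ f ⁻¹' Iic ((b + ε : ℝ) : EReal) := by
    filter_upwards [h, hc.eventually (gt_mem_nhds (lt_add_of_pos_right b hε))]
      with i ⟨hfin, hle⟩ hci
    exact (EReal.le_coe_toReal hfin).trans (EReal.coe_le_coe_iff.2 (hle.trans hci.le))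
  have hfa : f a ≤ ((b + ε : ℝ) : EReal) := (hf.isClosed_preimage _).mem_of_tendsto hy hsub
  simpa only [EReal.toReal_coe] using EReal.toReal_le_toReal hfa ha (EReal.coe_ne_top _)

section Subdifferential

variable {d : ℕ} {f : EuclideanSpace ℝ (Fin d) → EReal}
  {x u y v z : EuclideanSpace ℝ (Fin d)}

theorem ConvexFn.convexOn_toReal (hb : ∀ w, f w ≠ ⊥) (hf : ConvexFn f) :
    ConvexOn ℝ (edom f) fun w => (f w).toReal := by
  have hcombo : ∀ ⦃a⦄, a ∈ edom f → ∀ ⦃b⦄, b ∈ edom f → ∀ ⦃s t : ℝ⦄, 0 ≤ s → 0 ≤ t →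
      s + t = 1 → f (s • a + t • b) ≤ ((s * (f a).toReal + t * (f b).toReal : ℝ) : EReal) :=
    fun a ha b hb' s t hs ht hst =>
      @hf (a, (f a).toReal) (EReal.coe_toReal ha (hb a)).ge (b, (f b).toReal)
        (EReal.coe_toReal hb' (hb b)).ge s t hs ht hst
  refine ⟨fun a ha b hb' s t hs ht hst =>
    ne_top_of_le_ne_top (EReal.coe_ne_top _) (hcombo ha hb' hs ht hst),
    fun a ha b hb' s t hs ht hst => ?_⟩
  simpa only [EReal.toReal_coe, smul_eq_mul] using
    EReal.toReal_le_toReal (hcombo ha hb' hs ht hst) (hb _) (EReal.coe_ne_top _)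

theorem toReal_add_inner_le_of_mem_subdiff (hb : ∀ w, f w ≠ ⊥) (hv : v ∈ Subdiff f y)
    (hz : z ∈ edom f) : (f y).toReal + ⟪v, z - y⟫ ≤ (f z).toReal := by
  have h := hv.2 z
  rw [← EReal.coe_toReal hv.1 (hb y), ← EReal.coe_toReal hz (hb z)] at h
  exact_mod_cast h

theorem toReal_add_mul_inner_le_of_mem_subdiff (hb : ∀ w, f w ≠ ⊥) (hv : v ∈ Subdiff f y)
    (hvu : 0 ≤ ⟪v - u, y - x⟫) {c : ℝ} (hc : 0 ≤ c) (hdom : y + c • (y - x) ∈ edom f) :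
    (f y).toReal + c * ⟪u, y - x⟫ ≤ (f (y + c • (y - x))).toReal := by
  have h := toReal_add_inner_le_of_mem_subdiff hb hv hdom
  rw [add_sub_cancel_left, real_inner_smul_right] at h
  rw [inner_sub_left] at hvu
  nlinarith

theorem toReal_lineMap_add_le_of_monotone_on_dense (hb : ∀ w, f w ≠ ⊥)
    (hconv : ConvexOn ℝ (edom f) fun w => (f w).toReal) (hlsc : LowerSemicontinuous f)
    (hx : x ∈ edom f) {D : Set (EuclideanSpace ℝ (Fin d))}
    (hD : intrinsicInterior ℝ (edom f) ⊆ closure D)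
    (hmon : ∀ y ∈ D, ∃ v ∈ Subdiff f y, (0:ℝ) ≤ ⟪v - u, y - x⟫)
    (hz : z ∈ intrinsicInterior ℝ (edom f)) {t : ℝ} (ht₀ : 0 < t) (ht₁ : t ≤ 1) :
    (f (AffineMap.lineMap x z t)).toReal + (1 - t) * ⟪u, z - x⟫ ≤ (f z).toReal := by
  set y₀ := AffineMap.lineMap x z t with hy₀_def
  have hy₀ : y₀ ∈ intrinsicInterior ℝ (edom f) :=
    hconv.1.lineMap_mem_intrinsicInterior hx hz ht₀ ht₁
  have : (𝓝[D] y₀).NeBot := mem_closure_iff_nhdsWithin_neBot.1 (hD hy₀)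
  set c := t⁻¹ - 1 with hc
  have hc₀ : 0 ≤ c := sub_nonneg.2 ((one_le_inv₀ ht₀).2 ht₁)
  have hct : c * t = 1 - t := by rw [hc]; field_simp
  have hy₀x : y₀ - x = t • (z - x) := by
    rw [hy₀_def, AffineMap.lineMap_apply_module']
    abel
  have hZ : y₀ + c • (y₀ - x) = z := by
    rw [hy₀x, smul_smul, hct, hy₀_def, AffineMap.lineMap_apply_module']
    module
  -- `y ↦ y + c • (y - x)` moves along the ray from `x` and sends `y₀` to `z`
  have hZ_lim : Tendsto (fun y => y + c • (y - x)) (𝓝[D] y₀)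
      (𝓝[affineSpan ℝ (edom f)] z) := by
    refine tendsto_nhdsWithin_iff.2 ⟨?_, eventually_nhdsWithin_of_forall fun y hy => ?_⟩
    · have := ((by fun_prop : Continuous fun y => y + c • (y - x)).tendsto y₀)
      rw [hZ] at this
      exact this.mono_left nhdsWithin_le_nhds
    · obtain ⟨v, hv, -⟩ := hmon y hy
      have := AffineMap.lineMap_mem (1 + c) (subset_affineSpan ℝ _ hx)
        (subset_affineSpan ℝ _ hv.1)
      rwa [AffineMap.lineMap_apply_module', show (1 + c) • (y - x) + x = y + c • (y - x) by
        module] at this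
  have hlim : Tendsto (fun y => (f (y + c • (y - x))).toReal - c * ⟪u, y - x⟫) (𝓝[D] y₀)
      (𝓝 ((f z).toReal - c * ⟪u, y₀ - x⟫)) :=
    ((hconv.continuousWithinAt_affineSpan hz).tendsto.comp hZ_lim).sub
      (((by fun_prop : Continuous fun y => c * ⟪u, y - x⟫).tendsto y₀).mono_left
        nhdsWithin_le_nhds)
  have hle := hlsc.toReal_le_of_tendsto (hb y₀) (tendsto_id.mono_left nhdsWithin_le_nhds) hlim
    (by
      filter_upwards [hZ_lim (mem_nhdsWithin_affineSpan_of_mem_intrinsicInterior hz),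
        self_mem_nhdsWithin] with y hZy hy
      obtain ⟨v, hv, hvu⟩ := hmon y hy
      have hray := toReal_add_mul_inner_le_of_mem_subdiff hb hv hvu hc₀ hZy
      exact ⟨hv.1, by simp only [id]; linarith⟩)
  have hinner : c * ⟪u, y₀ - x⟫ = (1 - t) * ⟪u, z - x⟫ := by
    rw [hy₀x, real_inner_smul_right, ← mul_assoc, hct]
  linarith

theorem toReal_add_inner_le_of_monotone_on_dense (hb : ∀ w, f w ≠ ⊥)
    (hconv : ConvexOn ℝ (edom f) fun w => (f w).toReal) (hlsc : LowerSemicontinuous f)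
    (hx : x ∈ edom f) {D : Set (EuclideanSpace ℝ (Fin d))}
    (hD : intrinsicInterior ℝ (edom f) ⊆ closure D)
    (hmon : ∀ y ∈ D, ∃ v ∈ Subdiff f y, (0:ℝ) ≤ ⟪v - u, y - x⟫)
    (hz : z ∈ intrinsicInterior ℝ (edom f)) :
    (f x).toReal + ⟪u, z - x⟫ ≤ (f z).toReal := by
  have hlim_y : Tendsto (AffineMap.lineMap x z) (𝓝[>] (0 : ℝ)) (𝓝 x) := by
    have := (AffineMap.lineMap_continuous (R := ℝ) (p := x) (q := z)).tendsto 0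
    rw [AffineMap.lineMap_apply_zero] at this
    exact this.mono_left nhdsWithin_le_nhds
  have hlim_c : Tendsto (fun t : ℝ => (f z).toReal - (1 - t) * ⟪u, z - x⟫) (𝓝[>] 0)
      (𝓝 ((f z).toReal - (1 - 0) * ⟪u, z - x⟫)) :=
    ((by fun_prop : Continuous fun t : ℝ => (f z).toReal - (1 - t) * ⟪u, z - x⟫).tendsto
      0).mono_left nhdsWithin_le_nhds
  have hle := hlsc.toReal_le_of_tendsto (hb x) hlim_y hlim_c (by
    filter_upwards [Ioc_mem_nhdsGT (zero_lt_one' ℝ)] with t ⟨ht₀, ht₁⟩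
    have hseg := toReal_lineMap_add_le_of_monotone_on_dense hb hconv hlsc hx hD hmon hz ht₀ ht₁
    exact ⟨intrinsicInterior_subset (hconv.1.lineMap_mem_intrinsicInterior hx hz ht₀ ht₁),
      by linarith⟩)
  linarith

end Subdifferential

theorem subdiff_from_dense_monotonicity_general {d : ℕ} (f : EuclideanSpace ℝ (Fin d) → EReal)
    (hprop : Proper f) (hconv : ConvexFn f) (hlsc : LowerSemicontinuous f)
    (x xstar : EuclideanSpace ℝ (Fin d)) (hx : x ∈ edom f)
    (D : Set (EuclideanSpace ℝ (Fin d)))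
    (hD2 : intrinsicInterior ℝ (edom f) ⊆ closure D)
    (hmon : ∀ y ∈ D, ∃ ystar ∈ Subdiff f y, (0:ℝ) ≤ ⟪ystar - xstar, y - x⟫) :
    xstar ∈ Subdiff f x := by
  have hb := hprop.1
  have hconv' := hconv.convexOn_toReal hb
  refine ⟨hx, fun z => ?_⟩
  by_cases hz : f z = ⊤
  · rw [hz]
    exact le_top
  have h := hconv'.le_of_forall_mem_intrinsicInterior
    (φ := fun w => (f x).toReal + ⟪xstar, w - x⟫) (by fun_prop)
    (fun w hw => toReal_add_inner_le_of_monotone_on_dense hb hconv' hlsc hx hD2 hmon hw) hz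
  rw [← EReal.coe_toReal hx (hb x), ← EReal.coe_toReal hz (hb z)]
  exact_mod_cast h

theorem subdiff_from_dense_monotonicity {d : ℕ} (f : EuclideanSpace ℝ (Fin d) → EReal)
    (hprop : Proper f) (hconv : ConvexFn f) (hlsc : LowerSemicontinuous f)
    (x xstar : EuclideanSpace ℝ (Fin d)) (hx : x ∈ edom f)
    (D : Set (EuclideanSpace ℝ (Fin d))) (hD1 : D ⊆ intrinsicInterior ℝ (edom f))
    (hD2 : intrinsicInterior ℝ (edom f) ⊆ closure D)
    (hmon : ∀ y ∈ D, ∃ ystar ∈ Subdiff f y, (0:ℝ) ≤ ⟪ystar - xstar, y - x⟫) :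
    xstar ∈ Subdiff f x :=
  subdiff_from_dense_monotonicity_general f hprop hconv hlsc x xstar hx D hD2 hmon
end
end

section
/- Let f, {f_n} be proper convex lower semicontinuous functions on ℝ^d such that s_{f_n} epigraphically converges to s_f, and suppose there exist a sequence {x_n}, a point x̄ ∈ dom s_f, and α ∈ ℝ with {s_{f_n}(x_n)} bounded and (x_n, f_n(x_n)) → (x̄, α). Then dom s_f ⊂ dom f_l ∩ dom f_u and dom f_l ∪ dom f_u ⊂ closure(dom s_f) = closure(dom f). -/
open Filter Topology MeasureTheory Set Metric RealInnerProductSpace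
open scoped ENNReal NNReal

noncomputable section

/-!
Bounded subgradients `wₙ ∈ ∂fₙ(xₙ)`, together with `fₙ(xₙ) → α` and `xₙ → x̄`, give affine
minorants of the `fₙ` with uniformly bounded slopes and intercepts, so `f_l > -∞` everywhere. At
`y ∈ dom ∂f` the limsup half of the epi-convergence of slopes gives `uₙ → y` carrying bounded
subgradients, and the subgradient inequality at `uₙ` tested at `xₙ` bounds `f_u(y)`.

The other inclusions rest on a proximal step (Brøndsted–Rockafellar): minimising
`g + ‖· - u‖² / (2λ)` moves `u` by at most `ε` to a point where `g` has a subgradient of norm at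
most `K`, where `K` depends only on `ε`, on an affine minorant of `g` and on `g u`. Applied to `f`
this gives `dom f ⊆ cl (dom ∂f)`. Applied to the `fₙ` at points `uₙ → y` with `fₙ(uₙ)` bounded,
it gives points of slope at most `K` near `y`; by compactness they cluster at a point where, by
the liminf half of epi-convergence, the slope of `f` is at most `K`.
-/

theorem LowerSemicontinuous.exists_forall_le_of_isBounded {α β : Type*} [PseudoMetricSpace α]
    [ProperSpace α] [LinearOrder β] {G : α → β} (hG : LowerSemicontinuous G) (u : α)
    (hb : Bornology.IsBounded {y | G y ≤ G u}) : ∃ z, ∀ y, G z ≤ G y := by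
  obtain ⟨z, -, hz⟩ := (hG.lowerSemicontinuousOn {y | G y ≤ G u}).exists_isMinOn
    ⟨u, le_refl (G u)⟩ (Metric.isCompact_of_isClosed_isBounded (hG.isClosed_preimage (G u)) hb)
  refine ⟨z, fun y => ?_⟩
  by_cases hy : G y ≤ G u
  · exact hz hy
  · exact (hz (le_refl (G u))).trans (not_le.mp hy).le

theorem StrictMono.exists_tendsto_comp_eq {X : Type*} [TopologicalSpace X] {τ : ℕ → ℕ}
    (hτ : StrictMono τ) {y : ℕ → X} {z : X} (hy : Tendsto y atTop (𝓝 z)) :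
    ∃ u : ℕ → X, Tendsto u atTop (𝓝 z) ∧ ∀ k, u (τ k) = y k := by
  refine ⟨Function.extend τ y fun _ => z, fun V hV => ?_, hτ.injective.extend_apply y _⟩
  obtain ⟨k₀, hk₀⟩ := eventually_atTop.mp (hy.eventually_mem hV)
  refine eventually_atTop.mpr ⟨τ k₀, fun n hn => ?_⟩
  by_cases h : ∃ k, τ k = n
  · obtain ⟨k, rfl⟩ := h
    rw [hτ.injective.extend_apply]
    exact hk₀ k (hτ.le_iff_le.mp hn)
  · rw [Function.extend_apply' _ _ _ h]
    exact mem_of_mem_nhds hV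

theorem neg_mul_norm_le_inner {F : Type*} [NormedAddCommGroup F] [InnerProductSpace ℝ F]
    {w v : F} {W : ℝ} (hw : ‖w‖ ≤ W) : -(W * ‖v‖) ≤ ⟪w, v⟫ := by
  have := mul_le_mul_of_nonneg_right hw (norm_nonneg v)
  linarith [neg_abs_le ⟪w, v⟫, abs_real_inner_le_norm w v]

theorem le_of_sq_le_add_mul {s a b ε : ℝ} (ha : 0 ≤ a) (hε : 0 < ε) (hs : s ^ 2 ≤ a + b * s)
    (hab : a + b * ε ≤ ε ^ 2) : s ≤ ε := by
  by_contra! h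
  nlinarith [mul_pos hε (sub_pos.mpr h)]

theorem le_of_forall_mem_Ioc_le_add_mul {A B c : ℝ} (h : ∀ t ∈ Ioc (0 : ℝ) 1, A ≤ B + t * c) :
    A ≤ B := by
  have hlim : Tendsto (fun t : ℝ => B + t * c) (𝓝[>] 0) (𝓝 B) := by
    have : Continuous fun t : ℝ => B + t * c := by fun_prop
    simpa using (this.tendsto 0).mono_left nhdsWithin_le_nhds
  exact ge_of_tendsto hlim (eventually_of_mem (Ioc_mem_nhdsGT one_pos) h)

variable {d : ℕ}

theorem ConvexFn.apply_add_smul_le {g : EuclideanSpace ℝ (Fin d) → EReal} (hc : ConvexFn g)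
    {p q : EuclideanSpace ℝ (Fin d)} {a b t : ℝ} (hp : g p = a) (hq : g q = b) (ht₀ : 0 ≤ t)
    (ht₁ : t ≤ 1) : g (p + t • (q - p)) ≤ (((1 - t) * a + t * b : ℝ) : EReal) := by
  have h := hc (show ((p, a) : EuclideanSpace ℝ (Fin d) × ℝ) ∈ _ from hp.le)
    (show ((q, b) : EuclideanSpace ℝ (Fin d) × ℝ) ∈ _ from hq.le) (sub_nonneg.mpr ht₁) ht₀
    (sub_add_cancel 1 t)
  rw [show p + t • (q - p) = (1 - t) • p + t • q by module]
  simpa [Prod.smul_def, smul_eq_mul] using h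

section Subdifferential

variable {f : EuclideanSpace ℝ (Fin d) → EReal} {x v : EuclideanSpace ℝ (Fin d)}

theorem slopeFn_le_norm (hv : v ∈ Subdiff f x) : slopeFn f x ≤ ‖v‖ :=
  sInf_le ⟨v, hv, rfl⟩

theorem exists_mem_subdiff_norm_lt {c : EReal} (h : slopeFn f x < c) :
    ∃ v ∈ Subdiff f x, (‖v‖ : EReal) < c := by
  obtain ⟨-, ⟨v, hv, rfl⟩, hvc⟩ := sInf_lt_iff.mp h
  exact ⟨v, hv, hvc⟩

theorem mem_domSub_of_slopeFn_le {K : ℝ} (h : slopeFn f x ≤ K) : x ∈ domSub f :=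
  let ⟨v, hv, _⟩ := exists_mem_subdiff_norm_lt (h.trans_lt (EReal.coe_lt_top K))
  ⟨v, hv⟩

theorem domSub_subset_edom : domSub f ⊆ edom f := fun _ ⟨_, hv⟩ => hv.1

theorem apply_le_add_norm_mul_of_mem_subdiff (hv : v ∈ Subdiff f x)
    (y : EuclideanSpace ℝ (Fin d)) : f x ≤ f y + ((‖v‖ * ‖y - x‖ : ℝ) : EReal) := by
  have hnonneg : 0 ≤ ⟪v, y - x⟫ + ‖v‖ * ‖y - x‖ := by
    linarith [neg_mul_norm_le_inner (w := v) (v := y - x) le_rfl]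
  calc f x ≤ f x + ((⟪v, y - x⟫ + ‖v‖ * ‖y - x‖ : ℝ) : EReal) :=
        le_add_of_nonneg_right (EReal.coe_nonneg.mpr hnonneg)
    _ = f x + ((⟪v, y - x⟫ : ℝ) : EReal) + ((‖v‖ * ‖y - x‖ : ℝ) : EReal) := by
        rw [EReal.coe_add, add_assoc]
    _ ≤ f y + ((‖v‖ * ‖y - x‖ : ℝ) : EReal) := add_le_add_left (hv.2 y) _

end Subdifferential

def IsAffineMinorant (g : EuclideanSpace ℝ (Fin d) → EReal) (w : EuclideanSpace ℝ (Fin d))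
    (c : ℝ) (p : EuclideanSpace ℝ (Fin d)) : Prop :=
  ∀ y, ((c + ⟪w, y - p⟫ : ℝ) : EReal) ≤ g y

namespace IsAffineMinorant

variable {g : EuclideanSpace ℝ (Fin d) → EReal} {w p : EuclideanSpace ℝ (Fin d)} {c : ℝ}

theorem ne_bot (h : IsAffineMinorant g w c p) (y : EuclideanSpace ℝ (Fin d)) : g y ≠ ⊥ :=
  ne_bot_of_le_ne_bot (EReal.coe_ne_bot _) (h y)

theorem mono {c₀ : ℝ} (h : IsAffineMinorant g w c p) (hc : c₀ ≤ c) :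
    IsAffineMinorant g w c₀ p := fun y =>
  (EReal.coe_le_coe_iff.mpr (by linarith)).trans (h y)

theorem recenter (h : IsAffineMinorant g w c p) (q : EuclideanSpace ℝ (Fin d)) :
    IsAffineMinorant g w (c + ⟪w, q - p⟫) q := fun y => by
  rw [add_assoc, ← inner_add_right, sub_add_sub_cancel']
  exact h y

theorem nonneg_of_le (h : IsAffineMinorant g w c p) {C : ℝ}
    (hp : g p ≤ ((c + C : ℝ) : EReal)) : 0 ≤ C := by
  have hle := EReal.coe_le_coe_iff.mp ((h p).trans hp)
  rw [sub_self, inner_zero_right] at hle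
  linarith

end IsAffineMinorant

theorem isAffineMinorant_of_mem_subdiff {f : EuclideanSpace ℝ (Fin d) → EReal}
    {x v : EuclideanSpace ℝ (Fin d)} {r : ℝ} (hv : v ∈ Subdiff f x) (hfx : f x = r) :
    IsAffineMinorant f v r x := fun y => by
  rw [EReal.coe_add, ← hfx]
  exact hv.2 y

section Proximal

variable {g : EuclideanSpace ℝ (Fin d) → EReal} {u w z : EuclideanSpace ℝ (Fin d)} {a lam : ℝ}

def proximalObjective (g : EuclideanSpace ℝ (Fin d) → EReal) (u : EuclideanSpace ℝ (Fin d))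
    (lam : ℝ) (y : EuclideanSpace ℝ (Fin d)) : EReal :=
  g y + ((‖y - u‖ ^ 2 / (2 * lam) : ℝ) : EReal)

theorem LowerSemicontinuous.proximalObjective (hl : LowerSemicontinuous g) :
    LowerSemicontinuous (proximalObjective g u lam) := by
  refine hl.add' (continuous_coe_real_ereal.comp (by fun_prop)).lowerSemicontinuous fun y => ?_
  exact EReal.continuousAt_add (Or.inr (EReal.coe_ne_bot _)) (Or.inr (EReal.coe_ne_top _))

theorem proximalObjective_self : proximalObjective g u lam u = g u := by
  simp [proximalObjective]

theorem IsAffineMinorant.sq_norm_sub_le (hmin : IsAffineMinorant g w a u) (hlam : 0 < lam)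
    {y : EuclideanSpace ℝ (Fin d)} {C : ℝ}
    (hy : proximalObjective g u lam y ≤ ((a + C : ℝ) : EReal)) :
    ‖y - u‖ ^ 2 ≤ 2 * lam * C + 2 * lam * ‖w‖ * ‖y - u‖ := by
  have h : ((a + ⟪w, y - u⟫ + ‖y - u‖ ^ 2 / (2 * lam) : ℝ) : EReal) ≤ ((a + C : ℝ) : EReal) :=
    (add_le_add_left (hmin y) _).trans hy
  have hreal := EReal.coe_le_coe_iff.mp h
  have hinner := neg_mul_norm_le_inner (w := w) (v := y - u) le_rfl
  have hdiv : ‖y - u‖ ^ 2 / (2 * lam) ≤ C + ‖w‖ * ‖y - u‖ := by linarith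
  rw [div_le_iff₀ (by positivity)] at hdiv
  linarith

theorem smul_sub_mem_subdiff_of_forall_le (hc : ConvexFn g) (hbot : ∀ y, g y ≠ ⊥)
    (hz : g z ≠ ⊤) (hmin : ∀ y, proximalObjective g u lam z ≤ proximalObjective g u lam y) :
    lam⁻¹ • (u - z) ∈ Subdiff g z := by
  refine ⟨hz, fun y => ?_⟩
  rcases eq_or_ne (g y) ⊤ with hy | hy
  · simp [hy]
  obtain ⟨gz, hgz⟩ : ∃ r : ℝ, g z = r := ⟨_, (EReal.coe_toReal hz (hbot z)).symm⟩
  obtain ⟨gy, hgy⟩ : ∃ r : ℝ, g y = r := ⟨_, (EReal.coe_toReal hy (hbot y)).symm⟩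
  rw [hgz, hgy, ← EReal.coe_add, EReal.coe_le_coe_iff]
  refine le_of_forall_mem_Ioc_le_add_mul (c := ‖y - z‖ ^ 2 / (2 * lam)) fun t ⟨ht₀, ht₁⟩ => ?_
  have hnorm : ‖z + t • (y - z) - u‖ ^ 2
      = ‖z - u‖ ^ 2 + 2 * (t * ⟪z - u, y - z⟫) + t ^ 2 * ‖y - z‖ ^ 2 := by
    rw [show z + t • (y - z) - u = (z - u) + t • (y - z) by abel, norm_add_sq_real,
      real_inner_smul_right, norm_smul, mul_pow, Real.norm_eq_abs, sq_abs]
  have hstep : gz + ‖z - u‖ ^ 2 / (2 * lam)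
      ≤ (1 - t) * gz + t * gy + ‖z + t • (y - z) - u‖ ^ 2 / (2 * lam) := by
    have h := (hmin (z + t • (y - z))).trans
      (add_le_add_left (hc.apply_add_smul_le hgz hgy ht₀.le ht₁) _)
    rw [proximalObjective, hgz] at h
    exact_mod_cast h
  rw [hnorm] at hstep
  rw [real_inner_smul_left, ← neg_sub z u, inner_neg_left]
  refine le_of_mul_le_mul_left ?_ ht₀
  linear_combination hstep

theorem IsAffineMinorant.exists_prox (hmin : IsAffineMinorant g w a u) (hc : ConvexFn g)
    (hl : LowerSemicontinuous g) (hu : g u ≠ ⊤) (hlam : 0 < lam) :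
    ∃ z, lam⁻¹ • (u - z) ∈ Subdiff g z ∧ proximalObjective g u lam z ≤ g u := by
  obtain ⟨C, hC⟩ : ∃ C : ℝ, g u = ((a + C : ℝ) : EReal) :=
    ⟨(g u).toReal - a, by rw [add_sub_cancel, EReal.coe_toReal hu (hmin.ne_bot u)]⟩
  have hbdd : Bornology.IsBounded
      {y | proximalObjective g u lam y ≤ proximalObjective g u lam u} := by
    have hA : 0 ≤ 2 * lam * C := mul_nonneg (by positivity) (hmin.nonneg_of_le hC.le)
    have hB : 0 ≤ 2 * lam * ‖w‖ := by positivity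
    refine (Metric.isBounded_closedBall (x := u) (r := 2 * lam * C + 2 * lam * ‖w‖ + 1)).subset
      fun y (hy : proximalObjective g u lam y ≤ _) => ?_
    rw [proximalObjective_self, hC] at hy
    rw [Metric.mem_closedBall, dist_eq_norm]
    exact le_of_sq_le_add_mul hA (by positivity) (hmin.sq_norm_sub_le hlam hy)
      (by nlinarith [mul_nonneg hA hA, mul_nonneg hA hB])
  obtain ⟨z, hz⟩ := hl.proximalObjective.exists_forall_le_of_isBounded u hbdd
  have hzu : proximalObjective g u lam z ≤ g u := (hz u).trans proximalObjective_self.le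
  have hzt : g z ≠ ⊤ := fun h => by
    rw [proximalObjective, h, EReal.top_add_coe, hC] at hzu
    exact EReal.coe_ne_top _ (top_le_iff.mp hzu)
  exact ⟨z, smul_sub_mem_subdiff_of_forall_le hc hmin.ne_bot hzt hz, hzu⟩

theorem IsAffineMinorant.exists_near_slopeFn_le (hmin : IsAffineMinorant g w a u)
    (hc : ConvexFn g) (hl : LowerSemicontinuous g) {C W ε : ℝ}
    (hu : g u ≤ ((a + C : ℝ) : EReal)) (hW : ‖w‖ ≤ W) (hε : 0 < ε) :
    ∃ z, ‖z - u‖ ≤ ε ∧ slopeFn g z ≤ ((2 * (C + W * ε + 1) / ε : ℝ) : EReal) := by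
  have hC := hmin.nonneg_of_le hu
  have hW₀ : 0 ≤ W := (norm_nonneg w).trans hW
  -- `λ` is chosen so that `2λ(C + Wε) ≤ ε²`, which forces the proximal point into `B(u, ε)`.
  set lam := ε ^ 2 / (2 * (C + W * ε + 1))
  have hlam : 0 < lam := by positivity
  have hlam_eq : 2 * lam * (C + W * ε + 1) = ε ^ 2 := by simp only [lam]; field_simp
  obtain ⟨z, hz, hzu⟩ :=
    hmin.exists_prox hc hl (ne_top_of_le_ne_top (EReal.coe_ne_top _) hu) hlam
  have hdist : ‖z - u‖ ≤ ε := by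
    refine le_of_sq_le_add_mul (a := 2 * lam * C) (b := 2 * lam * W) (by positivity) hε ?_
      (by nlinarith)
    have := hmin.sq_norm_sub_le hlam (hzu.trans hu)
    nlinarith [mul_le_mul_of_nonneg_left hW (by positivity : 0 ≤ 2 * lam * ‖z - u‖)]
  refine ⟨z, hdist, (slopeFn_le_norm hz).trans (EReal.coe_le_coe_iff.mpr ?_)⟩
  rw [norm_smul, norm_inv, Real.norm_of_nonneg hlam.le, norm_sub_rev, inv_mul_eq_div,
    div_le_iff₀ hlam]
  calc ‖z - u‖ ≤ ε := hdist
    _ = 2 * (C + W * ε + 1) / ε * lam := by field_simp; linear_combination -hlam_eq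

end Proximal

section EpiLimits

variable {φ : ℕ → EuclideanSpace ℝ (Fin d) → EReal} {x : EuclideanSpace ℝ (Fin d)}

theorem eLiminf_le_eLimsup : eLiminf φ x ≤ eLimsup φ x :=
  iInf₂_mono fun _ _ => liminf_le_limsup

theorem exists_tendsto_frequently_lt_of_eLiminf_lt {c : EReal} (h : eLiminf φ x < c) :
    ∃ u, Tendsto u atTop (𝓝 x) ∧ ∃ᶠ n in atTop, φ n (u n) < c := by
  obtain ⟨u, h⟩ := iInf_lt_iff.mp h
  obtain ⟨hu, h⟩ := iInf_lt_iff.mp h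
  exact ⟨u, hu, frequently_lt_of_liminf_lt (by isBoundedDefault) h⟩

theorem exists_tendsto_eventually_lt_of_eLimsup_lt {c : EReal} (h : eLimsup φ x < c) :
    ∃ u, Tendsto u atTop (𝓝 x) ∧ ∀ᶠ n in atTop, φ n (u n) < c := by
  obtain ⟨u, h⟩ := iInf_lt_iff.mp h
  obtain ⟨hu, h⟩ := iInf_lt_iff.mp h
  exact ⟨u, hu, eventually_lt_of_limsup_lt h⟩

theorem exists_le_of_frequently_exists_le {ψ : EuclideanSpace ℝ (Fin d) → EReal}
    (hψ : ∀ x, ψ x ≤ eLiminf φ x) {S : Set (EuclideanSpace ℝ (Fin d))} (hS : IsCompact S)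
    {K : EReal} (h : ∃ᶠ n in atTop, ∃ z ∈ S, φ n z ≤ K) : ∃ z ∈ S, ψ z ≤ K := by
  obtain ⟨σ, hσ, hσS⟩ := extraction_of_frequently_atTop h
  choose y hyS hyK using hσS
  obtain ⟨z, hzS, ρ, hρ, hyz⟩ := hS.tendsto_subseq hyS
  obtain ⟨u, hu, huτ⟩ := (hσ.comp hρ).exists_tendsto_comp_eq hyz
  refine ⟨z, hzS, (hψ z).trans ((iInf₂_le u hu).trans (liminf_le_of_frequently_le ?_))⟩
  exact (hσ.comp hρ).tendsto_atTop.frequently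
    (Frequently.of_forall fun k => (congrArg (φ _) (huτ k)).trans_le (hyK (ρ k)))

theorem eLiminf_ne_bot {W c : ℝ} {p : EuclideanSpace ℝ (Fin d)}
    (h : ∀ᶠ n in atTop, ∃ w, ‖w‖ ≤ W ∧ IsAffineMinorant (φ n) w c p)
    (x : EuclideanSpace ℝ (Fin d)) : eLiminf φ x ≠ ⊥ := by
  refine ne_bot_of_le_ne_bot (EReal.coe_ne_bot (c - W * (‖x - p‖ + 1)))
    (le_iInf₂ fun u hu => le_liminf_of_le (by isBoundedDefault) ?_)
  filter_upwards [h, (hu.sub_const p).norm.eventually_lt_const (lt_add_one ‖x - p‖)]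
    with n ⟨w, hw, hmin⟩ hn
  refine (EReal.coe_le_coe_iff.mpr ?_).trans (hmin (u n))
  have := neg_mul_norm_le_inner (v := u n - p) hw
  nlinarith [(norm_nonneg w).trans hw]

end EpiLimits

section Sequences

variable {f : EuclideanSpace ℝ (Fin d) → EReal} {fs : ℕ → EuclideanSpace ℝ (Fin d) → EReal}
  {x : ℕ → EuclideanSpace ℝ (Fin d)} {xbar : EuclideanSpace ℝ (Fin d)} {α : ℝ}

theorem eventually_isAffineMinorant {M : ℝ} (hM : ∀ n, slopeFn (fs n) (x n) ≤ (M : EReal))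
    (hx : Tendsto x atTop (𝓝 xbar))
    (hval : Tendsto (fun n => fs n (x n)) atTop (𝓝 (α : EReal))) :
    ∀ᶠ n in atTop, ∃ w, ‖w‖ ≤ M + 1 ∧ IsAffineMinorant (fs n) w (α - M - 2) xbar := by
  filter_upwards [hval.eventually_const_lt (EReal.coe_lt_coe_iff.mpr (sub_one_lt α)),
    (hx.sub_const xbar).norm.eventually_lt_const (by simp : ‖xbar - xbar‖ < 1)]
    with n hfn hxn
  obtain ⟨w, hw, hwM⟩ := exists_mem_subdiff_norm_lt ((hM n).trans_lt
    (EReal.coe_lt_coe_iff.mpr (lt_add_one M)))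
  have hwM : ‖w‖ ≤ M + 1 := (EReal.coe_lt_coe_iff.mp hwM).le
  obtain ⟨r, hr⟩ : ∃ r : ℝ, fs n (x n) = r :=
    ⟨_, (EReal.coe_toReal hw.1 (ne_bot_of_gt hfn)).symm⟩
  refine ⟨w, hwM, ((isAffineMinorant_of_mem_subdiff hw hr).recenter xbar).mono ?_⟩
  rw [hr, EReal.coe_lt_coe_iff] at hfn
  have := neg_mul_norm_le_inner (v := xbar - x n) hwM
  rw [norm_sub_rev] at this
  nlinarith [(norm_nonneg w).trans hwM]

theorem eLimsup_ne_top_of_mem_domSub (hepi : EpiConv (fun n => slopeFn (fs n)) (slopeFn f))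
    (hx : Tendsto x atTop (𝓝 xbar))
    (hval : Tendsto (fun n => fs n (x n)) atTop (𝓝 (α : EReal)))
    {y : EuclideanSpace ℝ (Fin d)} (hy : y ∈ domSub f) : eLimsup fs y ≠ ⊤ := by
  obtain ⟨v, hv⟩ := hy
  obtain ⟨u, hu, hslope⟩ := exists_tendsto_eventually_lt_of_eLimsup_lt ((hepi y).1.trans_lt
    ((slopeFn_le_norm hv).trans_lt (EReal.coe_lt_coe_iff.mpr (lt_add_one ‖v‖))))
  refine ne_top_of_le_ne_top (EReal.coe_ne_top (α + 1 + (‖v‖ + 1) * (‖xbar - y‖ + 1)))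
    ((iInf₂_le u hu).trans (limsup_le_of_le (by isBoundedDefault) ?_))
  filter_upwards [hslope, hval.eventually_lt_const (EReal.coe_lt_coe_iff.mpr (lt_add_one α)),
    (hx.sub hu).norm.eventually_lt_const (lt_add_one ‖xbar - y‖)] with n hsn hfn hdn
  obtain ⟨v', hv', hv'n⟩ := exists_mem_subdiff_norm_lt hsn
  have hv'n : ‖v'‖ ≤ ‖v‖ + 1 := (EReal.coe_lt_coe_iff.mp hv'n).le
  calc fs n (u n) ≤ fs n (x n) + ((‖v'‖ * ‖x n - u n‖ : ℝ) : EReal) :=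
        apply_le_add_norm_mul_of_mem_subdiff hv' (x n)
    _ ≤ ((α + 1 : ℝ) : EReal) + (((‖v‖ + 1) * (‖xbar - y‖ + 1) : ℝ) : EReal) :=
        add_le_add hfn.le (EReal.coe_le_coe_iff.mpr
          (mul_le_mul hv'n hdn.le (norm_nonneg _) (by positivity)))
    _ = _ := (EReal.coe_add _ _).symm

theorem mem_closure_domSub_of_eLiminf_ne_top (hcs : ∀ n, ConvexFn (fs n))
    (hls : ∀ n, LowerSemicontinuous (fs n))
    (hepi : ∀ y, slopeFn f y ≤ eLiminf (fun n => slopeFn (fs n)) y) {W c : ℝ}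
    {p : EuclideanSpace ℝ (Fin d)}
    (hmin : ∀ᶠ n in atTop, ∃ w, ‖w‖ ≤ W ∧ IsAffineMinorant (fs n) w c p)
    {y : EuclideanSpace ℝ (Fin d)} (hy : eLiminf fs y ≠ ⊤) : y ∈ closure (domSub f) := by
  obtain ⟨R, hR, -⟩ := EReal.exists_between_coe_real (lt_top_iff_ne_top.mpr hy)
  obtain ⟨u, hu, hfreq⟩ := exists_tendsto_frequently_lt_of_eLiminf_lt hR
  refine Metric.mem_closure_iff.mpr fun δ hδ => ?_
  obtain ⟨ε, hε, hεδ⟩ : ∃ ε : ℝ, 0 < ε ∧ 2 * ε < δ := ⟨δ / 3, by positivity, by linarith⟩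
  set C := R - c + W * (‖y - p‖ + ε)
  have hnear : ∃ᶠ n in atTop, ∃ z ∈ Metric.closedBall y (2 * ε),
      slopeFn (fs n) z ≤ ((2 * (C + W * ε + 1) / ε : ℝ) : EReal) := by
    refine (hfreq.and_eventually (hmin.and ((hu.sub_const y).norm.eventually_lt_const
      (by simpa using hε)))).mono ?_
    rintro n ⟨hfn, ⟨w, hw, hwn⟩, hun⟩
    have hgap : fs n (u n) ≤ ((c + ⟪w, u n - p⟫ + C : ℝ) : EReal) := by
      refine hfn.le.trans (EReal.coe_le_coe_iff.mpr ?_)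
      have := neg_mul_norm_le_inner (v := u n - p) hw
      have := norm_sub_le_norm_sub_add_norm_sub (u n) y p
      nlinarith [(norm_nonneg w).trans hw]
    obtain ⟨z, hz, hzK⟩ :=
      (hwn.recenter (u n)).exists_near_slopeFn_le (hcs n) (hls n) hgap hw hε
    refine ⟨z, ?_, hzK⟩
    rw [Metric.mem_closedBall, dist_eq_norm]
    linarith [norm_sub_le_norm_sub_add_norm_sub z (u n) y]
  obtain ⟨z, hz, hzK⟩ := exists_le_of_frequently_exists_le hepi (isCompact_closedBall y _) hnear
  refine ⟨z, mem_domSub_of_slopeFn_le hzK, ?_⟩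
  rw [dist_comm]
  linarith [Metric.mem_closedBall.mp hz]

theorem edom_subset_closure_domSub (hc : ConvexFn f) (hl : LowerSemicontinuous f)
    (hxbar : xbar ∈ domSub f) (hbot : f xbar ≠ ⊥) : edom f ⊆ closure (domSub f) := by
  intro y hy
  obtain ⟨v, hv⟩ := hxbar
  obtain ⟨r, hr⟩ : ∃ r : ℝ, f xbar = r := ⟨_, (EReal.coe_toReal hv.1 hbot).symm⟩
  have hmin := (isAffineMinorant_of_mem_subdiff hv hr).recenter y
  obtain ⟨s, hs⟩ : ∃ s : ℝ, f y = s := ⟨_, (EReal.coe_toReal hy (hmin.ne_bot y)).symm⟩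
  refine Metric.mem_closure_iff.mpr fun δ hδ => ?_
  obtain ⟨z, hz, hzK⟩ := hmin.exists_near_slopeFn_le hc hl
    (C := s - (r + ⟪v, y - xbar⟫)) (by rw [add_sub_cancel, hs]) le_rfl (half_pos hδ)
  refine ⟨z, mem_domSub_of_slopeFn_le hzK, ?_⟩
  rw [dist_comm, dist_eq_norm]
  linarith

end Sequences

theorem dom_inclusions_general {d : ℕ} (f : EuclideanSpace ℝ (Fin d) → EReal) (fs : ℕ → EuclideanSpace ℝ (Fin d) → EReal)
    (hpf : Proper f) (hcf : ConvexFn f) (hlf : LowerSemicontinuous f)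
    (hcs : ∀ n, ConvexFn (fs n))
    (hls : ∀ n, LowerSemicontinuous (fs n))
    (hepi : EpiConv (fun n => slopeFn (fs n)) (slopeFn f))
    (x : ℕ → EuclideanSpace ℝ (Fin d)) (xbar : EuclideanSpace ℝ (Fin d)) (α : ℝ)
    (hxbar : xbar ∈ domSub f)
    (hbdd : ∃ M : ℝ, ∀ n, slopeFn (fs n) (x n) ≤ (M : EReal))
    (hx : Filter.Tendsto x atTop (𝓝 xbar))
    (hval : Filter.Tendsto (fun n => fs n (x n)) atTop (𝓝 ((α : EReal)))) :
    domSub f ⊆ rdom (eLiminf fs) ∩ rdom (eLimsup fs) ∧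
      rdom (eLiminf fs) ∪ rdom (eLimsup fs) ⊆ closure (domSub f) ∧
      closure (domSub f) = closure (edom f) := by
  obtain ⟨M, hM⟩ := hbdd
  have hmin := eventually_isAffineMinorant hM hx hval
  have hle : ∀ y, eLiminf fs y ≤ eLimsup fs y := fun _ => eLiminf_le_eLimsup
  refine ⟨fun y hy => ?_, fun y hy => ?_, ?_⟩
  · have htop := eLimsup_ne_top_of_mem_domSub hepi hx hval hy
    exact ⟨⟨ne_top_of_le_ne_top htop (hle y), eLiminf_ne_bot hmin y⟩,
      htop, ne_bot_of_le_ne_bot (eLiminf_ne_bot hmin y) (hle y)⟩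
  · refine mem_closure_domSub_of_eLiminf_ne_top hcs hls (fun y => (hepi y).2) hmin ?_
    rcases hy with hy | hy
    exacts [hy.1, ne_top_of_le_ne_top hy.1 (hle y)]
  · exact (closure_mono domSub_subset_edom).antisymm
      (closure_minimal (edom_subset_closure_domSub hcf hlf hxbar (hpf.1 xbar)) isClosed_closure)

theorem dom_inclusions {d : ℕ} (f : EuclideanSpace ℝ (Fin d) → EReal) (fs : ℕ → EuclideanSpace ℝ (Fin d) → EReal)
    (hpf : Proper f) (hcf : ConvexFn f) (hlf : LowerSemicontinuous f)
    (hps : ∀ n, Proper (fs n)) (hcs : ∀ n, ConvexFn (fs n))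
    (hls : ∀ n, LowerSemicontinuous (fs n))
    (hepi : EpiConv (fun n => slopeFn (fs n)) (slopeFn f))
    (x : ℕ → EuclideanSpace ℝ (Fin d)) (xbar : EuclideanSpace ℝ (Fin d)) (α : ℝ)
    (hxbar : xbar ∈ domSub f)
    (hbdd : ∃ M : ℝ, ∀ n, slopeFn (fs n) (x n) ≤ (M : EReal))
    (hx : Filter.Tendsto x atTop (𝓝 xbar))
    (hval : Filter.Tendsto (fun n => fs n (x n)) atTop (𝓝 ((α : EReal)))) :
    domSub f ⊆ rdom (eLiminf fs) ∩ rdom (eLimsup fs) ∧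
      rdom (eLiminf fs) ∪ rdom (eLimsup fs) ⊆ closure (domSub f) ∧
      closure (domSub f) = closure (edom f) :=
  dom_inclusions_general f fs hpf hcf hlf hcs hls hepi x xbar α hxbar hbdd hx hval
end
end
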